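/- Let A be a directed-complete generalized ultrametric semilattice with distance set P, let F : A → A be contracting, let a be a post-fixed point of F, and let g be a function from ordinals to A such that g(0) = a, g(α+1) = F(g(α)) ⊓ F(F(g(α))) for every ordinal α, and for every limit ordinal λ, g(λ) is a least upper bound of {g(β) : β < λ} in (A, ⊑). If, for an ordinal α, g(α) ≠ F(g(α)) ⊓ F(F(g(α))), then for all ordinals β < γ < α + 2 one has g(β) ⊑ g(γ) and g(β) ≠ g(γ); in particular, β ↦ g(β) is a strictly order-preserving map from the ordinals below α + 2 into (A, ⊑). -/

import Mathlib

/-!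
Every iterate is a post-fixed point of `F`: a step `F x ⊓ F (F x)` is always post-fixed, and
post-fixedness passes to least upper bounds because `x ≤ y` and `x ≤ F x` force `x ≤ F y`.
With `x ≤ F x ≤ F (F x)` this makes the iteration monotone. A monotone iteration that stutters
once, `g β = g (β + 1)`, is constant from `β` on; so a repetition `g β = g γ` with
`β < γ ≤ α + 1` would give `g α = g (α + 1)`.
-/

/-- A generalized ultrametric semilattice over a meet-semilattice `A`
(with induced order `a ⊑ b ↔ a ⊓ b = a`, i.e. the `≤` of `SemilatticeInf`)
and a pointed partially ordered distance set `P` with least element `⊥`. -/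
structure GUSemilattice (A : Type*) (P : Type*) [SemilatticeInf A] [PartialOrder P] [OrderBot P] where
  d : A → A → P
  d_eq_bot_iff : ∀ a₁ a₂ : A, d a₁ a₂ = ⊥ ↔ a₁ = a₂
  d_symm : ∀ a₁ a₂ : A, d a₁ a₂ = d a₂ a₁
  d_ultra : ∀ (a₁ a₂ a₃ : A) (p : P), d a₁ a₂ ≤ p → d a₂ a₃ ≤ p → d a₁ a₃ ≤ p
  inf_le_inf_of_d_le : ∀ a₁ a₂ a₃ : A, d a₁ a₂ ≤ d a₁ a₃ → a₁ ⊓ a₃ ≤ a₁ ⊓ a₂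
  d_inf_inf_le : ∀ a₁ a₂ a₃ : A, d (a₁ ⊓ a₂) (a₁ ⊓ a₃) ≤ d a₂ a₃

variable {A P : Type*} [SemilatticeInf A] [PartialOrder P] [OrderBot P]

/-- `F` is contracting. -/
def GUSemilattice.Contracting (S : GUSemilattice A P) (F : A → A) : Prop :=
  ∀ a₁ a₂ : A, S.d (F a₁) (F a₂) ≤ S.d a₁ a₂

/-- `F` is strictly contracting. -/
def GUSemilattice.StrictlyContracting (S : GUSemilattice A P) (F : A → A) : Prop :=
  ∀ a₁ a₂ : A, a₁ ≠ a₂ → S.d (F a₁) (F a₂) < S.d a₁ a₂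

/-- `F` is strictly contracting on orbits. -/
def GUSemilattice.StrictlyContractingOnOrbits (S : GUSemilattice A P) (F : A → A) : Prop :=
  ∀ a : A, a ≠ F a → S.d (F a) (F (F a)) < S.d a (F a)

/-- A ball in the generalized ultrametric space associated with `S`. -/
def GUSemilattice.IsBall (S : GUSemilattice A P) (B : Set A) : Prop :=
  ∃ (a : A) (p : P), B = {x : A | S.d x a ≤ p}

/-- Spherical completeness: every nonempty chain of balls has nonempty intersection. -/
def GUSemilattice.SphericallyComplete (S : GUSemilattice A P) : Prop :=
  ∀ C : Set (Set A), C.Nonempty → IsChain (· ⊆ ·) C → (∀ B ∈ C, S.IsBall B) → (⋂₀ C).Nonempty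

/-- Directed-completeness: every nonempty directed subset has a least upper bound. -/
def DirectedComplete (A : Type*) [Preorder A] : Prop :=
  ∀ D : Set A, D.Nonempty → DirectedOn (· ≤ ·) D → ∃ s : A, IsLUB D s


open Order Set

structure IsTransfiniteOrbit {X : Type*} [Preorder X] (T : X → X) (g : Ordinal → X) : Prop where
  add_one : ∀ α, g (α + 1) = T (g α)
  limit : ∀ l, IsSuccLimit l → IsLUB (g '' Iio l) (g l)

namespace IsTransfiniteOrbit

variable {X : Type*} {T : X → X} {g : Ordinal → X}

theorem monotone [Preorder X] (hg : IsTransfiniteOrbit T g) (hT : ∀ β, g β ≤ T (g β)) :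
    Monotone g := by
  intro β γ hβγ
  induction γ using Ordinal.limitRecOn with
  | zero => rw [nonpos_iff_eq_zero.mp hβγ]
  | add_one γ ih =>
    rcases hβγ.lt_or_eq with hβγ | rfl
    · exact (ih (lt_add_one_iff.mp hβγ)).trans (hg.add_one γ ▸ hT γ)
    · rfl
  | limit l hl _ =>
    rcases hβγ.lt_or_eq with hβl | rfl
    · exact (hg.limit l hl).1 ⟨β, hβl, rfl⟩
    · rfl

theorem eq_of_le_of_eq_add_one [PartialOrder X] (hg : IsTransfiniteOrbit T g) (hmono : Monotone g)
    {β γ : Ordinal} (hstutter : g β = g (β + 1)) (hβγ : β ≤ γ) : g γ = g β := by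
  induction γ using Ordinal.limitRecOn with
  | zero => rw [nonpos_iff_eq_zero.mp hβγ]
  | add_one γ ih =>
    rcases hβγ.lt_or_eq with hβγ | rfl
    · rw [hg.add_one, ih (lt_add_one_iff.mp hβγ), ← hg.add_one, ← hstutter]
    · rfl
  | limit l hl ih =>
    rcases hβγ.lt_or_eq with hβl | rfl
    · refine le_antisymm ((hg.limit l hl).2 ?_) (hmono hβγ)
      rintro _ ⟨δ, hδl, rfl⟩
      rcases le_total δ β with hδβ | hβδ
      · exact hmono hδβ
      · exact (ih δ hδl hβδ).le
    · rfl

theorem strictMonoOn_Iic_add_one [PartialOrder X] (hg : IsTransfiniteOrbit T g)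
    (hmono : Monotone g) {α : Ordinal} (hα : g α ≠ T (g α)) : StrictMonoOn g (Iic (α + 1)) := by
  intro β _ γ hγα hβγ
  refine (hmono hβγ.le).lt_of_ne fun heq => hα ?_
  have hstutter : g β = g (β + 1) :=
    (hmono (lt_add_one β).le).antisymm ((hmono (add_one_le_of_lt hβγ)).trans heq.ge)
  have hβα : β ≤ α := lt_add_one_iff.mp (hβγ.trans_le hγα)
  rw [← hg.add_one, hg.eq_of_le_of_eq_add_one hmono hstutter (hβα.trans (lt_add_one α).le),
    hg.eq_of_le_of_eq_add_one hmono hstutter hβα]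

end IsTransfiniteOrbit

namespace GUSemilattice

variable {S : GUSemilattice A P}

theorem d_left_le_of_le_of_le {x y z : A} (hxy : x ≤ y) (hyz : y ≤ z) : S.d x y ≤ S.d x z := by
  simpa only [inf_eq_right.mpr hxy, inf_eq_left.mpr hyz] using S.d_inf_inf_le y x z

theorem d_right_le_of_le_of_le {x y z : A} (hxy : x ≤ y) (hyz : y ≤ z) : S.d y z ≤ S.d x z :=
  S.d_ultra y x z _ (S.d_symm y x ▸ d_left_le_of_le_of_le hxy hyz) le_rfl

namespace Contracting

variable {F : A → A}

theorem le_apply_of_le_of_le_apply (hF : S.Contracting F) {x y : A} (hxy : x ≤ y)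
    (hx : x ≤ F x) : x ≤ F y := by
  have hmid : S.d y (y ⊓ F x) ≤ S.d x y := by
    rw [S.d_symm]
    exact d_right_le_of_le_of_le (le_inf hxy hx) inf_le_left
  have hright : S.d (y ⊓ F x) (y ⊓ F y) ≤ S.d x y :=
    (S.d_inf_inf_le y (F x) (F y)).trans (hF x y)
  have hclose : S.d y (y ⊓ F y) ≤ S.d y x :=
    S.d_symm x y ▸ S.d_ultra _ _ _ _ hmid hright
  have := S.inf_le_inf_of_d_le y (y ⊓ F y) x hclose
  rw [inf_eq_right.mpr hxy, inf_left_idem] at this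
  exact this.trans inf_le_right

theorem inf_apply_apply_le_apply (hF : S.Contracting F) (x : A) :
    F x ⊓ F (F x) ≤ F (F x ⊓ F (F x)) := by
  have hstep : S.d (F (F x)) (F (F x ⊓ F (F x))) ≤ S.d (F x) (F (F x)) :=
    (hF _ _).trans (by simpa only [inf_idem] using S.d_inf_inf_le (F x) (F x) (F (F x)))
  have hclose : S.d (F x) (F (F x ⊓ F (F x))) ≤ S.d (F x) (F (F x)) :=
    S.d_ultra _ _ _ _ le_rfl hstep
  exact (S.inf_le_inf_of_d_le _ _ _ hclose).trans inf_le_right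

theorem le_apply_of_isLUB (hF : S.Contracting F) {s : Set A} {y : A} (hy : IsLUB s y)
    (hs : ∀ x ∈ s, x ≤ F x) : y ≤ F y :=
  hy.2 fun x hx => hF.le_apply_of_le_of_le_apply (hy.1 hx) (hs x hx)

theorem le_apply_of_isTransfiniteOrbit (hF : S.Contracting F) {g : Ordinal → A}
    (hg : IsTransfiniteOrbit (fun x => F x ⊓ F (F x)) g) (h0 : g 0 ≤ F (g 0)) (γ : Ordinal) :
    g γ ≤ F (g γ) := by
  induction γ using Ordinal.limitRecOn with
  | zero => exact h0
  | add_one γ _ => exact hg.add_one γ ▸ hF.inf_apply_apply_le_apply (g γ)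
  | limit l hl ih =>
    exact hF.le_apply_of_isLUB (hg.limit l hl) (by rintro _ ⟨β, hβ, rfl⟩; exact ih β hβ)

end Contracting

end GUSemilattice

theorem transfinite_iteration_strictMono_below_of_not_stuttering_general
    (S : GUSemilattice A P)
    (F : A → A) (hF : S.Contracting F)
    (a : A) (ha : a ≤ F a)
    (g : Ordinal → A)
    (hg0 : g 0 = a)
    (hgsucc : ∀ α : Ordinal, g (α + 1) = F (g α) ⊓ F (F (g α)))
    (hglim : ∀ l : Ordinal, Order.IsSuccLimit l → IsLUB (g '' Set.Iio l) (g l))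
    (α : Ordinal) (hα : g α ≠ F (g α) ⊓ F (F (g α))) :
    ∀ β γ : Ordinal, β < γ → γ < α + 2 → g β ≤ g γ ∧ g β ≠ g γ := by
  intro β γ hβγ hγα
  have hg : IsTransfiniteOrbit (fun x => F x ⊓ F (F x)) g := ⟨hgsucc, hglim⟩
  have hpost := hF.le_apply_of_isTransfiniteOrbit hg (hg0 ▸ ha)
  have hmono : Monotone g := hg.monotone fun β =>
    le_inf (hpost β) (hF.le_apply_of_le_of_le_apply (hpost β) (hpost β))
  have hγ : γ ≤ α + 1 := lt_add_one_iff.mp (by rwa [add_assoc, one_add_one_eq_two])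
  have hlt := hg.strictMonoOn_Iic_add_one hmono hα (hβγ.le.trans hγ) hγ hβγ
  exact ⟨hlt.le, hlt.ne⟩

theorem transfinite_iteration_strictMono_below_of_not_stuttering
    (S : GUSemilattice A P) (hdc : DirectedComplete A)
    (F : A → A) (hF : S.Contracting F)
    (a : A) (ha : a ≤ F a)
    (g : Ordinal → A)
    (hg0 : g 0 = a)
    (hgsucc : ∀ α : Ordinal, g (α + 1) = F (g α) ⊓ F (F (g α)))
    (hglim : ∀ l : Ordinal, Order.IsSuccLimit l → IsLUB (g '' Set.Iio l) (g l))
    (α : Ordinal) (hα : g α ≠ F (g α) ⊓ F (F (g α))) :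
    ∀ β γ : Ordinal, β < γ → γ < α + 2 → g β ≤ g γ ∧ g β ≠ g γ :=
  transfinite_iteration_strictMono_below_of_not_stuttering_general S F hF a ha g hg0 hgsucc hglim α
    hα
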